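/- For curvature c > 0 and m, n in the ball {x ∈ ℝⁿ : c‖x‖² < 1}, the squared norm of the Möbius sum satisfies the identity 1 − c‖m ⊕ n‖² = (1 − c‖m‖²)(1 − c‖n‖²) / (1 + 2c⟨m,n⟩ + c²‖m‖²‖n‖²); in particular c‖m ⊕ n‖² < 1, so Möbius addition is closed on the ball. -/
import Mathlib


open scoped RealInnerProductSpace

/-- Möbius addition with curvature `c` on the Poincaré ball. -/
noncomputable def mobiusAdd {n : ℕ} (c : ℝ) (m x : EuclideanSpace ℝ (Fin n)) :
    EuclideanSpace ℝ (Fin n) :=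
  (1 / (1 + 2 * c * ⟪m, x⟫ + c ^ 2 * ‖m‖ ^ 2 * ‖x‖ ^ 2)) •
    ((1 + 2 * c * ⟪m, x⟫ + c * ‖x‖ ^ 2) • m + (1 - c * ‖m‖ ^ 2) • x)

theorem mobiusAdd_norm_identity {n : ℕ} (c : ℝ) (hc : 0 < c)
    (m x : EuclideanSpace ℝ (Fin n)) (hm : c * ‖m‖ ^ 2 < 1) (hx : c * ‖x‖ ^ 2 < 1) :
    1 - c * ‖mobiusAdd c m x‖ ^ 2 =
      (1 - c * ‖m‖ ^ 2) * (1 - c * ‖x‖ ^ 2) /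
        (1 + 2 * c * ⟪m, x⟫ + c ^ 2 * ‖m‖ ^ 2 * ‖x‖ ^ 2) ∧
    c * ‖mobiusAdd c m x‖ ^ 2 < 1 := by
  set s : ℝ := ⟪m, x⟫ with hs
  have hsx : |s| ≤ ‖m‖ * ‖x‖ := abs_real_inner_le_norm m x
  have hs1 := (abs_le.mp hsx).1
  have hmx : c * (‖m‖ * ‖x‖) < 1 := by
    nlinarith [sq_nonneg (‖m‖ - ‖x‖), norm_nonneg m, norm_nonneg x]
  have hsq : 0 < (1 - c * (‖m‖ * ‖x‖)) ^ 2 := pow_pos (by linarith) 2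
  have hD : 0 < 1 + 2 * c * s + c ^ 2 * ‖m‖ ^ 2 * ‖x‖ ^ 2 := by nlinarith
  set D : ℝ := 1 + 2 * c * s + c ^ 2 * ‖m‖ ^ 2 * ‖x‖ ^ 2 with hDdef
  have key : ∀ a b : ℝ, ‖a • m + b • x‖ ^ 2 =
      a ^ 2 * ‖m‖ ^ 2 + 2 * a * b * s + b ^ 2 * ‖x‖ ^ 2 := by
    intro a b
    have hxm : (⟪x, m⟫ : ℝ) = s := by rw [real_inner_comm, ← hs]
    rw [← real_inner_self_eq_norm_sq]
    simp only [inner_add_left, inner_add_right, real_inner_smul_left,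
      real_inner_smul_right, real_inner_self_eq_norm_sq, hxm, ← hs,
      norm_smul, Real.norm_eq_abs, mul_pow, sq_abs]
    ring
  have hnorm : ‖mobiusAdd c m x‖ ^ 2 = (1 / D) ^ 2 *
      ((1 + 2 * c * s + c * ‖x‖ ^ 2) ^ 2 * ‖m‖ ^ 2 +
        2 * (1 + 2 * c * s + c * ‖x‖ ^ 2) * (1 - c * ‖m‖ ^ 2) * s +
        (1 - c * ‖m‖ ^ 2) ^ 2 * ‖x‖ ^ 2) := by
    rw [mobiusAdd, norm_smul, mul_pow, key, Real.norm_eq_abs, sq_abs, ← hs, ← hDdef]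
  have heq : 1 - c * ‖mobiusAdd c m x‖ ^ 2 =
      (1 - c * ‖m‖ ^ 2) * (1 - c * ‖x‖ ^ 2) / D := by
    rw [hnorm]
    field_simp
    ring
  refine ⟨heq, ?_⟩
  have hpos : 0 < (1 - c * ‖m‖ ^ 2) * (1 - c * ‖x‖ ^ 2) / D := by
    apply div_pos (by nlinarith) hD
  linarith [heq ▸ hpos]
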